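/- arXiv:2011.10396 — 3 statements merged into one kernel-verified Lean document; each statement's English description precedes it below -/
import Mathlib

section
/- Let M, N ∈ ℝ^{p×k} be real matrices and suppose NᵀM admits a singular value decomposition NᵀM = U S Vᵀ, where U, V ∈ ℝ^{k×k} are orthogonal (UᵀU = I and VᵀV = I) and S ∈ ℝ^{k×k} is diagonal with nonnegative diagonal entries. Then R* = U Vᵀ solves the orthogonal Procrustes problem: for every R ∈ ℝ^{k×k} with RᵀR = I, ‖M − N(UVᵀ)‖_F ≤ ‖M − NR‖_F. -/
/-!
Since orthogonal `R` preserve the Frobenius norm,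
`‖M - N R‖_F² = ‖M‖_F² + ‖N‖_F² - 2 tr(Rᵀ Nᵀ M)`, so it suffices to maximise
`tr(Rᵀ U S Vᵀ) = tr(S W)` with `W = Vᵀ Rᵀ U` orthogonal. The diagonal entries of an
orthogonal matrix are at most `1` and those of `S` are nonnegative, so `tr(S W) ≤ tr S`,
with equality for `R = U Vᵀ`, i.e. `W = 1`.
-/

open Matrix

/-- Frobenius norm of a real matrix: `‖A‖_F = √(Σ_{i,j} a_{ij}²)`. -/
noncomputable def frobeniusNorm {p k : ℕ} (A : Matrix (Fin p) (Fin k) ℝ) : ℝ :=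
  Real.sqrt (∑ i, ∑ j, (A i j) ^ 2)

namespace Matrix

variable {m n : Type*} [Fintype m] [Fintype n]

theorem sum_sq_eq_trace_transpose_mul_self (A : Matrix m n ℝ) :
    ∑ i, ∑ j, A i j ^ 2 = trace (Aᵀ * A) := by
  simp only [trace, diag, mul_apply, transpose_apply, sq]
  exact Finset.sum_comm

variable [DecidableEq n]

theorem trace_transpose_mul_self_sub_mul (M N : Matrix m n ℝ) {R : Matrix n n ℝ}
    (hR : R ∈ orthogonalGroup n ℝ) :
    trace ((M - N * R)ᵀ * (M - N * R)) =
      trace (Mᵀ * M) + trace (Nᵀ * N) - 2 * trace (Rᵀ * (Nᵀ * M)) := by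
  have hNR : trace ((N * R)ᵀ * (N * R)) = trace (Nᵀ * N) := by
    rw [transpose_mul, trace_mul_comm, Matrix.mul_assoc, ← Matrix.mul_assoc R,
      (mem_orthogonalGroup_iff n ℝ).1 hR, Matrix.one_mul, trace_mul_comm]
  have hMNR : trace (Mᵀ * (N * R)) = trace (Rᵀ * (Nᵀ * M)) := by
    rw [← trace_transpose, transpose_mul, transpose_mul, transpose_transpose, Matrix.mul_assoc]
  have hNRM : trace ((N * R)ᵀ * M) = trace (Rᵀ * (Nᵀ * M)) := by
    rw [transpose_mul, Matrix.mul_assoc]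
  rw [transpose_sub, Matrix.sub_mul, Matrix.mul_sub, Matrix.mul_sub, trace_sub, trace_sub,
    trace_sub, hNR, hMNR, hNRM]
  ring

theorem diag_le_one_of_mem_orthogonalGroup {W : Matrix n n ℝ} (hW : W ∈ orthogonalGroup n ℝ)
    (i : n) : W i i ≤ 1 := by
  have hcol : ∑ j, W j i ^ 2 = 1 := by
    simpa [mul_apply, one_apply, sq] using
      congrFun (congrFun ((mem_orthogonalGroup_iff' n ℝ).1 hW) i) i
  have hsq : W i i ^ 2 ≤ 1 :=
    hcol ▸ Finset.single_le_sum (fun j _ => sq_nonneg (W j i)) (Finset.mem_univ i)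
  nlinarith

theorem IsDiag.trace_mul_le {S W : Matrix n n ℝ} (hS : S.IsDiag) (hS₀ : ∀ i, 0 ≤ S i i)
    (hW : W ∈ orthogonalGroup n ℝ) : trace (S * W) ≤ trace S := by
  rw [← hS.diagonal_diag]
  simp only [trace, diag, diagonal_mul, diagonal_apply_eq]
  exact Finset.sum_le_sum fun i _ =>
    mul_le_of_le_one_right (hS₀ i) (diag_le_one_of_mem_orthogonalGroup hW i)

variable {U S V R : Matrix n n ℝ}

theorem trace_transpose_mul_svd_le (hU : U ∈ orthogonalGroup n ℝ)
    (hV : V ∈ orthogonalGroup n ℝ)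
    (hR : R ∈ orthogonalGroup n ℝ) (hS : S.IsDiag) (hS₀ : ∀ i, 0 ≤ S i i) :
    trace (Rᵀ * (U * S * Vᵀ)) ≤ trace S := by
  have hW : Vᵀ * Rᵀ * U ∈ orthogonalGroup n ℝ :=
    mul_mem (mul_mem (transpose_mem_unitaryGroup_iff.2 hV)
      (transpose_mem_unitaryGroup_iff.2 hR)) hU
  calc trace (Rᵀ * (U * S * Vᵀ)) = trace (S * (Vᵀ * Rᵀ * U)) := by
        rw [trace_mul_comm, Matrix.mul_assoc, Matrix.mul_assoc, trace_mul_comm]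
        simp only [Matrix.mul_assoc]
    _ ≤ trace S := hS.trace_mul_le hS₀ hW

theorem trace_transpose_mul_svd_eq (hU : U ∈ orthogonalGroup n ℝ)
    (hV : V ∈ orthogonalGroup n ℝ) :
    trace ((U * Vᵀ)ᵀ * (U * S * Vᵀ)) = trace S := by
  rw [transpose_mul, transpose_transpose, Matrix.mul_assoc V, ← Matrix.mul_assoc Uᵀ,
    ← Matrix.mul_assoc Uᵀ, (mem_orthogonalGroup_iff' n ℝ).1 hU, Matrix.one_mul,
    trace_mul_comm, Matrix.mul_assoc, (mem_orthogonalGroup_iff' n ℝ).1 hV, Matrix.mul_one]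

end Matrix

theorem frobeniusNorm_sub_mul_eq {p k : ℕ} (M N : Matrix (Fin p) (Fin k) ℝ)
    {R : Matrix (Fin k) (Fin k) ℝ} (hR : R ∈ orthogonalGroup (Fin k) ℝ) :
    frobeniusNorm (M - N * R) =
      √(trace (Mᵀ * M) + trace (Nᵀ * N) - 2 * trace (Rᵀ * (Nᵀ * M))) := by
  rw [frobeniusNorm, sum_sq_eq_trace_transpose_mul_self, trace_transpose_mul_self_sub_mul M N hR]

/-- **Orthogonal Procrustes.** If `NᵀM = U S Vᵀ` is a singular value decomposition
(`U, V` orthogonal, `S` diagonal with nonnegative diagonal entries), then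
`R* = U Vᵀ` minimizes `‖M − N R‖_F` over orthogonal `R`. -/
theorem orthogonal_procrustes {p k : ℕ}
    (M N : Matrix (Fin p) (Fin k) ℝ)
    (U S V : Matrix (Fin k) (Fin k) ℝ)
    (hU : Uᵀ * U = 1) (hV : Vᵀ * V = 1)
    (hSdiag : ∀ i j, i ≠ j → S i j = 0)
    (hSnonneg : ∀ i, 0 ≤ S i i)
    (hSVD : Nᵀ * M = U * S * Vᵀ) :
    ∀ R : Matrix (Fin k) (Fin k) ℝ, Rᵀ * R = 1 →
      frobeniusNorm (M - N * (U * Vᵀ)) ≤ frobeniusNorm (M - N * R) := by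
  intro R hR
  rw [← mem_orthogonalGroup_iff'] at hU hV hR
  have hUV : U * Vᵀ ∈ orthogonalGroup (Fin k) ℝ :=
    mul_mem hU (transpose_mem_unitaryGroup_iff.2 hV)
  rw [frobeniusNorm_sub_mul_eq M N hUV, frobeniusNorm_sub_mul_eq M N hR, hSVD,
    trace_transpose_mul_svd_eq hU hV]
  gcongr
  exact trace_transpose_mul_svd_le hU hV hR (fun i j => hSdiag i j) hSnonneg
end

section
/- Let A ∈ ℝ^{k×k} be a real matrix with singular value decomposition A = U S Vᵀ, where U, V ∈ ℝ^{k×k} are orthogonal (UᵀU = I and VᵀV = I) and S ∈ ℝ^{k×k} is diagonal with nonnegative diagonal entries. Then for every R ∈ ℝ^{k×k} with RᵀR = I one has Tr(Rᵀ A) ≤ Tr(S), and equality holds for R = U Vᵀ, i.e. Tr((UVᵀ)ᵀ A) = Tr(S). In particular, R = UVᵀ maximizes Tr(Rᵀ A) over all orthogonal matrices R. -/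
/-!
Writing `A = U S Vᵀ`, cyclicity of the trace gives `Tr(Rᵀ A) = Tr(M S)` with `M = Vᵀ Rᵀ U`
orthogonal. Since `S` is diagonal, `Tr(M S) = ∑ Mᵢᵢ Sᵢᵢ`, and each column of `M` is a unit
vector, so `Mᵢᵢ ≤ 1`; as `Sᵢᵢ ≥ 0` this gives `Tr(M S) ≤ Tr(S)`. For `R = U Vᵀ`, `M = 1`.
-/

open Matrix

namespace Matrix

variable {n R : Type*} [Fintype n] [DecidableEq n]

theorem transpose_mul_self_mul_eq_one [CommSemiring R] {A B : Matrix n n R}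
    (hA : Aᵀ * A = 1) (hB : Bᵀ * B = 1) : (A * B)ᵀ * (A * B) = 1 := by
  rw [transpose_mul, Matrix.mul_assoc, ← Matrix.mul_assoc Aᵀ, hA, Matrix.one_mul, hB]

theorem transpose_transpose_mul_transpose_eq_one [CommRing R] {A : Matrix n n R}
    (hA : Aᵀ * A = 1) : Aᵀᵀ * Aᵀ = 1 := by
  rw [transpose_transpose, mul_eq_one_comm.mp hA]

variable [Ring R] [LinearOrder R] [IsStrictOrderedRing R]

theorem diag_le_one_of_transpose_mul_self_eq_one {M : Matrix n n R}
    (hM : Mᵀ * M = 1) (i : n) : M i i ≤ 1 := by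
  have hcol : ∑ j, M j i ^ 2 = 1 := by
    simpa [Matrix.mul_apply, sq] using congrFun (congrFun hM i) i
  have hsq : M i i ^ 2 ≤ 1 :=
    hcol ▸ Finset.single_le_sum (fun j _ => sq_nonneg (M j i)) (Finset.mem_univ i)
  exact (abs_le.mp ((sq_le_one_iff_abs_le_one _).mp hsq)).2

theorem trace_mul_le_trace_of_isDiag {M S : Matrix n n R} (hM : Mᵀ * M = 1)
    (hS : S.IsDiag) (hS₀ : ∀ i, 0 ≤ S i i) : trace (M * S) ≤ trace S := by
  rw [← hS.diagonal_diag]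
  simp only [trace, diag_apply, mul_diagonal, diagonal_apply_eq]
  exact Finset.sum_le_sum fun i _ =>
    mul_le_of_le_one_left (hS₀ i) (diag_le_one_of_transpose_mul_self_eq_one hM i)

end Matrix

/-- If `A = U S Vᵀ` is a singular value decomposition of a square matrix `A`
(`U, V` orthogonal, `S` diagonal with nonnegative diagonal entries), then
`Tr(Rᵀ A) ≤ Tr(S)` for every orthogonal `R`, with equality for `R = U Vᵀ`.
In particular `R = U Vᵀ` maximizes `Tr(Rᵀ A)` over orthogonal matrices. -/
theorem trace_mul_le_trace_singularValues {k : ℕ}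
    (A U S V : Matrix (Fin k) (Fin k) ℝ)
    (hU : Uᵀ * U = 1) (hV : Vᵀ * V = 1)
    (hSdiag : ∀ i j, i ≠ j → S i j = 0)
    (hSnonneg : ∀ i, 0 ≤ S i i)
    (hSVD : A = U * S * Vᵀ) :
    (∀ R : Matrix (Fin k) (Fin k) ℝ, Rᵀ * R = 1 →
      Matrix.trace (Rᵀ * A) ≤ Matrix.trace S) ∧
    Matrix.trace ((U * Vᵀ)ᵀ * A) = Matrix.trace S := by
  subst hSVD
  refine ⟨fun R hR => ?_, ?_⟩
  · have hM : (Vᵀ * (Rᵀ * U))ᵀ * (Vᵀ * (Rᵀ * U)) = 1 :=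
      transpose_mul_self_mul_eq_one (transpose_transpose_mul_transpose_eq_one hV)
        (transpose_mul_self_mul_eq_one (transpose_transpose_mul_transpose_eq_one hR) hU)
    calc trace (Rᵀ * (U * S * Vᵀ)) = trace (Vᵀ * (Rᵀ * U) * S) := by
          rw [Matrix.mul_assoc Vᵀ, trace_mul_comm Vᵀ]; simp only [Matrix.mul_assoc]
      _ ≤ trace S := trace_mul_le_trace_of_isDiag hM hSdiag hSnonneg
  · calc trace ((U * Vᵀ)ᵀ * (U * S * Vᵀ)) = trace (V * (Uᵀ * U) * S * Vᵀ) := by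
          simp only [transpose_mul, transpose_transpose, Matrix.mul_assoc]
      _ = trace S := by
          rw [hU, Matrix.mul_one, trace_mul_comm, ← Matrix.mul_assoc, hV, Matrix.one_mul]
end

section
/- Let p ≥ 1, let k ∈ ℝ^p and μ > 0, and let α ∈ ℝ be such that Σ_{i=1}^{p} max(α − k_i/μ, 0) = 1. Define m* ∈ ℝ^p by m*_i = max(α − k_i/μ, 0). Then m* lies in the probability simplex, and for every m ∈ ℝ^p with m_i ≥ 0 for all i and Σ_{i=1}^{p} m_i = 1, one has ‖m* + (1/μ)·k‖₂² ≤ ‖m + (1/μ)·k‖₂². That is, the soft-thresholded vector m* is the minimizer, over the probability simplex, of m ↦ ‖m + (1/μ)·k‖₂². -/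
/-!
The map `x ↦ (x + c)²` is convex with derivative `2 (x + c)` at `x`, and at the soft-thresholded
point `max (α - c) 0` the value `max (α - c) 0 + c = max α c` is `α` unless that coordinate is
zero. Hence every coordinate satisfies the variational inequality
`(x + c)² - (m* + c)² ≥ 2 α (x - m*)` for `x ≥ 0`, and summing it over a vector with the same
total mass as `m*` makes the right-hand side vanish.
-/

open Finset

theorem two_mul_sub_soft_threshold_le_sq_sub_sq {x : ℝ} (hx : 0 ≤ x) (c α : ℝ) :
    2 * α * (x - max (α - c) 0) ≤ (x + c) ^ 2 - (max (α - c) 0 + c) ^ 2 := by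
  rcases le_total c α with hc | hc
  · rw [max_eq_left (by linarith)]
    nlinarith [sq_nonneg (x + c - α)]
  · rw [max_eq_right (by linarith)]
    nlinarith [sq_nonneg x]

theorem sum_sq_soft_threshold_add_le {ι : Type*} [Fintype ι] (c : ι → ℝ) (α : ℝ)
    {m : ι → ℝ} (hm : ∀ i, 0 ≤ m i) (hsum : ∑ i, m i = ∑ i, max (α - c i) 0) :
    ∑ i, (max (α - c i) 0 + c i) ^ 2 ≤ ∑ i, (m i + c i) ^ 2 := by
  have hcoord := sum_le_sum fun i (_ : i ∈ univ) =>
    two_mul_sub_soft_threshold_le_sq_sub_sq (hm i) (c i) α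
  rw [← mul_sum, sum_sub_distrib, sum_sub_distrib, hsum, sub_self, mul_zero] at hcoord
  linarith

theorem simplex_projection_soft_threshold_general {p : ℕ}
    (k : Fin p → ℝ) (μ : ℝ) (α : ℝ)
    (hsum : ∑ i, max (α - k i / μ) 0 = 1)
    (mstar : Fin p → ℝ) (hmstar : ∀ i, mstar i = max (α - k i / μ) 0) :
    ((∀ i, 0 ≤ mstar i) ∧ ∑ i, mstar i = 1) ∧
    (∀ m : Fin p → ℝ, (∀ i, 0 ≤ m i) → ∑ i, m i = 1 →
      ∑ i, (mstar i + (1 / μ) * k i) ^ 2 ≤ ∑ i, (m i + (1 / μ) * k i) ^ 2) := by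
  have hdiv : ∀ i, k i / μ = 1 / μ * k i := fun i => by rw [one_div_mul_eq_div]
  simp only [hdiv] at hsum hmstar
  simp only [hmstar]
  exact ⟨⟨fun i => le_max_right _ _, hsum⟩, fun m hm hmsum =>
    sum_sq_soft_threshold_add_le _ α hm (hmsum.trans hsum.symm)⟩

/-- Soft-thresholding solves the simplex-constrained least-squares problem:
if `Σ_i max(α − k_i/μ, 0) = 1` then `m*_i = max(α − k_i/μ, 0)` lies in the
probability simplex and minimizes `‖m + (1/μ)·k‖₂²` over the simplex. -/
theorem simplex_projection_soft_threshold {p : ℕ} (hp : 1 ≤ p)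
    (k : Fin p → ℝ) (μ : ℝ) (hμ : 0 < μ) (α : ℝ)
    (hsum : ∑ i, max (α - k i / μ) 0 = 1)
    (mstar : Fin p → ℝ) (hmstar : ∀ i, mstar i = max (α - k i / μ) 0) :
    ((∀ i, 0 ≤ mstar i) ∧ ∑ i, mstar i = 1) ∧
    (∀ m : Fin p → ℝ, (∀ i, 0 ≤ m i) → ∑ i, m i = 1 →
      ∑ i, (mstar i + (1 / μ) * k i) ^ 2 ≤ ∑ i, (m i + (1 / μ) * k i) ^ 2) :=
  simplex_projection_soft_threshold_general k μ α hsum mstar hmstar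
end
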